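/- Let ψ ∈ D_ℝ and φ = Γ₁[ψ]. Then for any 0 ≤ S ≤ T < ∞: φ(T) = 0 if and only if ψ^S(T − S) = inf_{s∈[0,T−S]} ψ^S(s) and ψ^S(T − S) ≤ −φ(S). Moreover, if φ(S) = 0 and δ > 0, then φ(T) = 0 for all T ∈ [S, S + δ] if and only if ψ is nonincreasing on [S, S + δ]. -/

import Mathlib

open MeasureTheory Filter Set
open scoped NNReal ENNReal BoundedContinuousFunction Topology

noncomputable section

/-- Càdlàg on `[0,∞)`: right-continuous at every `t ≥ 0`, with left limits at
every `t > 0` (along `[0,t)`). -/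
def CadlagOn {E : Type*} [TopologicalSpace E] (f : ℝ → E) : Prop :=
  (∀ t : ℝ, 0 ≤ t → ContinuousWithinAt f (Set.Ici t) t) ∧
  (∀ t : ℝ, 0 < t → ∃ l : E, Filter.Tendsto f (nhdsWithin t (Set.Ico 0 t)) (nhds l))

/-- `D_ℝ`: real-valued càdlàg paths on `[0,∞)`. -/
def DR (f : ℝ → ℝ) : Prop := CadlagOn f

/-- `D_ℝ^↑`: nonnegative nondecreasing real-valued càdlàg paths on `[0,∞)`. -/
def DRup (f : ℝ → ℝ) : Prop :=
  CadlagOn f ∧ (∀ t : ℝ, 0 ≤ t → 0 ≤ f t) ∧ MonotoneOn f (Set.Ici 0)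

/-- `D_M`: càdlàg paths with values in the space of finite nonnegative measures
on `[0,∞)`, equipped with the topology of weak convergence. -/
def DM (ζ : ℝ → FiniteMeasure ℝ≥0) : Prop := CadlagOn ζ

/-- `D_M^↑`: paths in `D_M` such that `t ↦ ∫ f dζ_t` is nondecreasing for every
nonnegative bounded continuous `f` on `[0,∞)`. -/
def DMup (ζ : ℝ → FiniteMeasure ℝ≥0) : Prop :=
  CadlagOn ζ ∧
  ∀ f : ℝ≥0 →ᵇ ℝ≥0, MonotoneOn (fun t => (ζ t).testAgainstNN f) (Set.Ici 0)

/-- First component of the Skorokhod map on the half-line: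
`Γ₁[ψ](t) = ψ(t) − inf_{s∈[0,t]} (ψ(s) ∧ 0)`. -/
def Gamma1 (ψ : ℝ → ℝ) (t : ℝ) : ℝ :=
  ψ t - sInf ((fun s => min (ψ s) 0) '' Set.Icc 0 t)

/-- Second component of the Skorokhod map on the half-line: `Γ₂[ψ] = Γ₁[ψ] − ψ`. -/
def Gamma2 (ψ : ℝ → ℝ) (t : ℝ) : ℝ := Gamma1 ψ t - ψ t

/-- Extension of `g : [0,∞) → ℝ` by `0` on `(-∞,0)`. -/
def lsExt (g : ℝ → ℝ) : ℝ → ℝ := fun t => if t < 0 then 0 else g t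

/- The Lebesgue–Stieltjes measure `m^g(B) = g(0)δ₀(B) + ∫_{(0,∞)} 1_B dg` of a
nonnegative nondecreasing right-continuous `g` on `[0,∞)`, realized as the
Stieltjes measure of the extension of `g` by `0` on `(-∞,0)`. -/
open scoped Classical in
def lsMeasure (g : ℝ → ℝ) : Measure ℝ :=
  if h : Monotone (lsExt g) ∧ ∀ t, ContinuousWithinAt (lsExt g) (Set.Ici t) t then
    StieltjesFunction.measure ⟨lsExt g, h.1, h.2⟩
  else 0

/-- The measure-valued Skorokhod problem (MVSP): `(ξ,β,ι)` solves the MVSP for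
the data `(α,μ)`. -/
def SolvesMVSP (α : ℝ → FiniteMeasure ℝ≥0) (μ : ℝ → ℝ)
    (ξ β : ℝ → FiniteMeasure ℝ≥0) (ι : ℝ → ℝ) : Prop :=
  (∀ x : ℝ≥0, ∀ t : ℝ, 0 ≤ t →
    (ξ t (Set.Iic x) : ℝ) = (α t (Set.Iic x) : ℝ) - μ t + (β t (Set.Ioi x) : ℝ) + ι t) ∧
  (∀ x : ℝ≥0, ∀ᵐ t ∂(lsMeasure (fun s => (β s (Set.Ioi x) : ℝ))), (ξ t (Set.Iic x) : ℝ) = 0) ∧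
  (∀ x : ℝ≥0, ∀ᵐ t ∂(lsMeasure ι), (ξ t (Set.Iic x) : ℝ) = 0) ∧
  (∀ t : ℝ, 0 ≤ t → (β t Set.univ : ℝ) + ι t = μ t)

/-- System (30): `(ξ,β,ι)` solves the MVSP for `(α, μ+ρ)` and `ξ_t[0,t) = 0`
for every `t > 0`. -/
def Solves30 (α : ℝ → FiniteMeasure ℝ≥0) (μ : ℝ → ℝ)
    (ξ β : ℝ → FiniteMeasure ℝ≥0) (ι ρ : ℝ → ℝ) : Prop :=
  SolvesMVSP α (fun t => μ t + ρ t) ξ β ι ∧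
  ∀ t : ℝ, 0 < t → (ξ t (Set.Iio (Real.toNNReal t)) : ℝ) = 0

/-- A minimal solution of system (30): a solution (lying in the appropriate
path spaces) whose reneging function `ρ` is pointwise below that of any other
solution. -/
def IsMinimalSol30 (α : ℝ → FiniteMeasure ℝ≥0) (μ : ℝ → ℝ)
    (ξ β : ℝ → FiniteMeasure ℝ≥0) (ι ρ : ℝ → ℝ) : Prop :=
  (DM ξ ∧ DMup β ∧ DRup ι ∧ DRup ρ ∧ Solves30 α μ ξ β ι ρ) ∧
  ∀ (ξ' β' : ℝ → FiniteMeasure ℝ≥0) (ι' ρ' : ℝ → ℝ),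
    DM ξ' → DMup β' → DRup ι' → DRup ρ' → Solves30 α μ ξ' β' ι' ρ' →
    ∀ t : ℝ, 0 ≤ t → ρ t ≤ ρ' t

/-- The (topological) support of a finite measure on `[0,∞)`: the set of points
all of whose open neighborhoods have positive measure. -/
def measSupport (ν : FiniteMeasure ℝ≥0) : Set ℝ≥0 :=
  {x : ℝ≥0 | ∀ u : Set ℝ≥0, IsOpen u → x ∈ u → ν u ≠ 0}

/-- `σ(ν) = inf supp[ν]`, with value `∞` when `ν = 0`. -/
def sigmaOf (ν : FiniteMeasure ℝ≥0) : ℝ≥0∞ :=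
  sInf ((fun x : ℝ≥0 => (x : ℝ≥0∞)) '' measSupport ν)

/-- Assumption A on the data `(α,μ)`. -/
def AssumptionA (α : ℝ → FiniteMeasure ℝ≥0) (μ : ℝ → ℝ) : Prop :=
  (∃ (ξ0 : FiniteMeasure ℝ≥0) (a0 : ℝ → FiniteMeasure ℝ≥0)
      (lam : ℝ → ℝ) (ν : FiniteMeasure ℝ≥0),
    (∀ x : ℝ≥0, ξ0 {x} = 0) ∧
    ContinuousOn a0 (Set.Ici 0) ∧ DMup a0 ∧
    (∀ t : ℝ, 0 ≤ t → ∀ x : ℝ≥0, a0 t {x} = 0) ∧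
    Measurable lam ∧ (∀ s : ℝ, 0 ≤ s → 0 ≤ lam s) ∧
    (∀ t : ℝ, 0 ≤ t → α t = a0 t + ξ0) ∧
    (∀ t : ℝ, 0 ≤ t → ∀ x : ℝ≥0, (a0 t (Set.Iic x) : ℝ) =
      ∫ s in Set.Icc (0:ℝ) t,
        (if s ≤ (x:ℝ) then lam s * (ν (Set.Iic (Real.toNNReal ((x:ℝ) - s))) : ℝ) else 0)) ∧
    (∀ t : ℝ, 0 ≤ t →
      Filter.Tendsto (fun x : ℝ≥0 =>
          sSup ((fun s => lam s * (ν (Set.Iic x) : ℝ)) '' Set.Icc (0:ℝ) t))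
        (nhdsWithin 0 (Set.Ioi 0)) (nhds 0))) ∧
  (∃ μ0 m : ℝ → ℝ,
    ContinuousOn μ0 (Set.Ici 0) ∧ (∀ t : ℝ, 0 ≤ t → 0 ≤ μ0 t) ∧
    MonotoneOn μ0 (Set.Ici 0) ∧
    Measurable m ∧ (∀ s : ℝ, 0 ≤ s → 0 ≤ m s) ∧
    (∀ t : ℝ, 0 ≤ t → MeasureTheory.IntegrableOn m (Set.Icc 0 t)) ∧
    (∀ t : ℝ, 0 ≤ t → 0 < sInf (m '' Set.Icc (0:ℝ) t)) ∧
    (∀ t : ℝ, 0 ≤ t → μ t = μ0 t + ∫ s in Set.Icc (0:ℝ) t, m s))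

/-!
`Γ₁[ψ](T) = 0` exactly when `ψ(T) ≤ 0` and `ψ(T)` is the minimum of `ψ` on `[0, T]`; this needs
`ψ` bounded below on `[0, T]`, which holds for càdlàg paths by compactness. Splitting
`[0, T] = [0, S] ∪ [S, T]` gives the first claim. For the second, if `ψ` is nonincreasing on
`[S, T]` and `Γ₁[ψ](S) = 0`, then `ψ(T) ≤ ψ(S) ≤ 0 ∧ inf_{[0,S]} ψ`.
-/

namespace CadlagOn

variable {E : Type*} [LinearOrder E] [TopologicalSpace E] [BoundedGENhdsClass E] {f : ℝ → E}

theorem isBoundedUnder_ge (hf : CadlagOn f) {x : ℝ} (hx : 0 ≤ x) :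
    IsBoundedUnder (· ≥ ·) (𝓝[Ici 0] x) f := by
  have hright : IsBoundedUnder (· ≥ ·) (𝓝[Ici x] x) f := (hf.1 x hx).tendsto.isBoundedUnder_ge
  rcases hx.eq_or_lt with rfl | hpos
  · exact hright
  · obtain ⟨l, hl⟩ := hf.2 x hpos
    rw [← Ico_union_Ici_eq_Ici hx, nhdsWithin_union, IsBoundedUnder, map_sup]
    exact isBounded_sup hl.isBoundedUnder_ge hright

theorem bddBelow_image_Icc [Nonempty E] (hf : CadlagOn f) (T : ℝ) : BddBelow (f '' Icc 0 T) := by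
  refine isCompact_Icc.induction_on (p := fun s => BddBelow (f '' s)) (by simp)
    (fun s t hst ht => ht.mono (image_mono hst))
    (fun s t hs ht => by rw [image_union]; exact hs.union ht) fun x hx => ?_
  obtain ⟨b, hb⟩ := hf.isBoundedUnder_ge hx.1
  refine ⟨{y | b ≤ f y}, nhdsWithin_mono x Icc_subset_Ici_self hb, b, ?_⟩
  rintro _ ⟨y, hy, rfl⟩
  exact hy

end CadlagOn

section

variable {α β : Type*} [ConditionallyCompleteLinearOrder β] {f : α → β} {s : Set α}

theorem bddBelow_image_min (hf : BddBelow (f '' s)) (c : β) :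
    BddBelow ((fun a => min (f a) c) '' s) := by
  have hmin : Monotone fun b : β => min b c := fun _ _ h => min_le_min_right c h
  simpa only [image_image] using hmin.map_bddBelow hf

theorem le_csInf_image_min_iff (hs : s.Nonempty) (hf : BddBelow (f '' s)) {c x : β} :
    x ≤ sInf ((fun a => min (f a) c) '' s) ↔ x ≤ c ∧ ∀ a ∈ s, x ≤ f a := by
  rw [le_csInf_iff (bddBelow_image_min hf c) (hs.image _), forall_mem_image]
  simp only [le_min_iff]
  obtain ⟨a, ha⟩ := hs
  exact ⟨fun h => ⟨(h ha).2, fun b hb => (h hb).1⟩, fun h b hb => ⟨h.2 b hb, h.1⟩⟩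

theorem eq_csInf_image_iff (hf : BddBelow (f '' s)) {a : α} (ha : a ∈ s) :
    f a = sInf (f '' s) ↔ ∀ b ∈ s, f a ≤ f b :=
  ⟨fun h _ hb => h ▸ csInf_le hf (mem_image_of_mem f hb),
    fun h => (IsLeast.csInf_eq ⟨mem_image_of_mem f ha, forall_mem_image.2 h⟩).symm⟩

end

section Gamma1

variable {ψ : ℝ → ℝ} {S T : ℝ}

theorem gamma1_eq_zero_iff (hT : 0 ≤ T) (hψ : BddBelow (ψ '' Icc 0 T)) :
    Gamma1 ψ T = 0 ↔ ψ T ≤ 0 ∧ ∀ s ∈ Icc 0 T, ψ T ≤ ψ s := by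
  have hT_mem : T ∈ Icc 0 T := ⟨hT, le_rfl⟩
  rw [Gamma1, sub_eq_zero, ← le_csInf_image_min_iff ⟨T, hT_mem⟩ hψ]
  refine ⟨le_of_eq, fun h => le_antisymm h ?_⟩
  exact csInf_le_of_le (bddBelow_image_min hψ 0) (mem_image_of_mem _ hT_mem) (min_le_left _ _)

theorem sub_le_neg_gamma1_iff :
    ψ T - ψ S ≤ -Gamma1 ψ S ↔ ψ T ≤ sInf ((fun s => min (ψ s) 0) '' Icc 0 S) := by
  rw [Gamma1, neg_sub, sub_le_sub_iff_right]

theorem sub_eq_csInf_shift_iff (hST : S ≤ T) (hψ : BddBelow (ψ '' Icc S T)) :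
    ψ T - ψ S = sInf ((fun s => ψ (S + s) - ψ S) '' Icc 0 (T - S)) ↔
      ∀ u ∈ Icc S T, ψ T ≤ ψ u := by
  have hshift : (fun s => ψ (S + s) - ψ S) '' Icc 0 (T - S) = (fun u => ψ u - ψ S) '' Icc S T := by
    rw [← image_image (fun u => ψ u - ψ S) (S + ·), image_const_add_Icc, add_zero,
      add_sub_cancel]
  have hbdd : BddBelow ((fun u => ψ u - ψ S) '' Icc S T) := by
    have hsub : Monotone fun y : ℝ => y - ψ S := fun _ _ h => sub_le_sub_right h _
    simpa only [image_image] using hsub.map_bddBelow hψ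
  rw [hshift, eq_csInf_image_iff (f := fun u => ψ u - ψ S) hbdd ⟨hST, le_rfl⟩]
  simp only [sub_le_sub_iff_right]

theorem gamma1_eq_zero_iff_of_le (hS : 0 ≤ S) (hST : S ≤ T) (hψ : BddBelow (ψ '' Icc 0 T)) :
    Gamma1 ψ T = 0 ↔
      (ψ T - ψ S = sInf ((fun s => ψ (S + s) - ψ S) '' Icc 0 (T - S)) ∧
        ψ T - ψ S ≤ -Gamma1 ψ S) := by
  have hψS : BddBelow (ψ '' Icc 0 S) := hψ.mono (image_mono (Icc_subset_Icc_right hST))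
  have hψST : BddBelow (ψ '' Icc S T) := hψ.mono (image_mono (Icc_subset_Icc_left hS))
  rw [gamma1_eq_zero_iff (hS.trans hST) hψ, sub_eq_csInf_shift_iff hST hψST,
    sub_le_neg_gamma1_iff, le_csInf_image_min_iff (nonempty_Icc.2 hS) hψS,
    ← Icc_union_Icc_eq_Icc hS hST]
  simp only [mem_union, or_imp, forall_and]
  tauto

theorem gamma1_eq_zero_on_Icc_iff_antitoneOn (hψ : ∀ T, BddBelow (ψ '' Icc 0 T)) {U : ℝ}
    (hS : 0 ≤ S) (hS_zero : Gamma1 ψ S = 0) :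
    (∀ T ∈ Icc S U, Gamma1 ψ T = 0) ↔ AntitoneOn ψ (Icc S U) := by
  constructor
  · intro h a ha b hb hab
    exact ((gamma1_eq_zero_iff (hS.trans hb.1) (hψ b)).1 (h b hb)).2 a ⟨hS.trans ha.1, hab⟩
  · intro hanti T hT
    obtain ⟨hS_nonpos, hS_min⟩ := (gamma1_eq_zero_iff hS (hψ S)).1 hS_zero
    have hTS : ψ T ≤ ψ S := hanti ⟨le_rfl, hT.1.trans hT.2⟩ hT hT.1
    refine (gamma1_eq_zero_iff (hS.trans hT.1) (hψ T)).2 ⟨hTS.trans hS_nonpos, fun s hs => ?_⟩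
    rcases le_total s S with hsS | hSs
    · exact hTS.trans (hS_min s ⟨hs.1, hsS⟩)
    · exact hanti ⟨hSs, hs.2.trans hT.2⟩ hT hs.2

end Gamma1

/-- Characterization of the zero set of `φ = Γ₁[ψ]`: for `0 ≤ S ≤ T`, `φ(T) = 0`
iff `ψ^S(T−S)` attains the infimum of `ψ^S` over `[0,T−S]` and is `≤ −φ(S)`;
moreover if `φ(S) = 0`, then `φ ≡ 0` on `[S,S+δ]` iff `ψ` is nonincreasing on
`[S,S+δ]`. -/
theorem skorokhod_map_zero_set
    (ψ : ℝ → ℝ) (hψ : DR ψ) :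
    (∀ S T : ℝ, 0 ≤ S → S ≤ T →
      (Gamma1 ψ T = 0 ↔
        (ψ T - ψ S = sInf ((fun s => ψ (S + s) - ψ S) '' Set.Icc 0 (T - S)) ∧
         ψ T - ψ S ≤ -(Gamma1 ψ S)))) ∧
    (∀ S δ : ℝ, 0 ≤ S → 0 < δ → Gamma1 ψ S = 0 →
      ((∀ T ∈ Set.Icc S (S + δ), Gamma1 ψ T = 0) ↔
        AntitoneOn ψ (Set.Icc S (S + δ)))) := by
  have hbdd : ∀ T, BddBelow (ψ '' Icc 0 T) := CadlagOn.bddBelow_image_Icc hψ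
  exact ⟨fun S T hS hST => gamma1_eq_zero_iff_of_le hS hST (hbdd T),
    fun S _ hS _ hS_zero => gamma1_eq_zero_on_Icc_iff_antitoneOn hbdd hS hS_zero⟩

end
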